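/- arXiv:1703.02199 — 4 statements merged into one kernel-verified Lean document; each statement's English description precedes it below -/
import Mathlib

section
/- Let (T,g) be a closure pair for a based space (𝕋,t₀). If f : (X,x₀) → (Y,y₀) is a continuous map of based topological spaces and H is a subgroup of π₁(X,x₀), then f_#(cl_{T,g}(H)) ≤ cl_{T,g}(f_#(H)), where the first closure is taken in π₁(X,x₀) and the second in π₁(Y,y₀). -/
open CategoryTheory

noncomputable section

universe u

attribute [local instance] Path.Homotopic.setoid

/-- The element of the fundamental group determined by a loop. -/
def loopClass {X : Type u} [TopologicalSpace X] {x : X} (γ : Path x x) :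
    FundamentalGroup X x :=
  FundamentalGroup.fromPath (X := TopCat.of X) ⟦γ⟧

/-- The homomorphism on fundamental groups induced by a based continuous map. -/
def inducedHom {X Y : Type u} [TopologicalSpace X] [TopologicalSpace Y]
    (f : C(X, Y)) (x : X) {y : Y} (h : f x = y) :
    FundamentalGroup X x →* FundamentalGroup Y y := by
  subst h
  exact (FundamentalGroupoid.fundamentalGroupoidFunctor.map
    (X := TopCat.of X) (Y := TopCat.of Y) (TopCat.ofHom f)).mapEnd ⟨x⟩

/-- Change of basepoint along a path, as an isomorphism of fundamental groups. -/
def pathConjEquiv {X : Type u} [TopologicalSpace X] {x y : X} (α : Path x y) :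
    FundamentalGroup X x ≃* FundamentalGroup X y :=
  FundamentalGroup.fundamentalGroupMulEquivOfPath α

/-- The path-conjugate subgroup `H^α = [α⁻]·H·[α]` of `π₁(X, α 1)`. -/
def conjSubgroup {X : Type u} [TopologicalSpace X] {x y : X} (α : Path x y)
    (H : Subgroup (FundamentalGroup X x)) : Subgroup (FundamentalGroup X y) :=
  H.map (pathConjEquiv α).toMonoidHom

/-- A subgroup `H ≤ π₁(X,x₀)` is `(T,g)`-closed for the closure pair `(T,g)` on the
based test space `(𝕋,t₀)` if for every continuous map `f : 𝕋 → X` with `f t₀ = x₀`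
and `f#(T) ≤ H` one has `f#(g) ∈ H`. -/
def IsTGClosed {T : Type u} [TopologicalSpace T] (t₀ : T)
    (Tsub : Subgroup (FundamentalGroup T t₀)) (g : FundamentalGroup T t₀)
    {X : Type u} [TopologicalSpace X] (x₀ : X)
    (H : Subgroup (FundamentalGroup X x₀)) : Prop :=
  ∀ (f : C(T, X)) (hf : f t₀ = x₀),
    Subgroup.map (inducedHom f t₀ hf) Tsub ≤ H → inducedHom f t₀ hf g ∈ H

/-- The `(T,g)`-closure of a subgroup `H ≤ π₁(X,x₀)`: the intersection of all
`(T,g)`-closed subgroups of `π₁(X,x₀)` containing `H`. -/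
def tgClosure {T : Type u} [TopologicalSpace T] (t₀ : T)
    (Tsub : Subgroup (FundamentalGroup T t₀)) (g : FundamentalGroup T t₀)
    {X : Type u} [TopologicalSpace X] (x₀ : X)
    (H : Subgroup (FundamentalGroup X x₀)) : Subgroup (FundamentalGroup X x₀) :=
  sInf {K : Subgroup (FundamentalGroup X x₀) | IsTGClosed t₀ Tsub g x₀ K ∧ H ≤ K}

/-! Composing a test map `𝕋 → X` with `f` gives a test map `𝕋 → Y`, so the preimage under `f_#`
of a `(T,g)`-closed subgroup is `(T,g)`-closed. The preimage of `cl_{T,g}(f_#(H))` therefore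
contains `cl_{T,g}(H)`. -/

lemma inducedHom_comp {T X Y : Type u} [TopologicalSpace T] [TopologicalSpace X]
    [TopologicalSpace Y] (φ : C(T, X)) (f : C(X, Y)) (t₀ : T) {x₀ : X} {y₀ : Y}
    (hφ : φ t₀ = x₀) (hf : f x₀ = y₀) :
    (inducedHom f x₀ hf).comp (inducedHom φ t₀ hφ) =
      inducedHom (f.comp φ) t₀ (by rw [ContinuousMap.comp_apply, hφ, hf]) := by
  subst hφ hf
  ext a
  induction a using Quotient.inductionOn
  rfl

section Closure

variable {T : Type u} [TopologicalSpace T] {t₀ : T}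
  {Tsub : Subgroup (FundamentalGroup T t₀)} {g : FundamentalGroup T t₀}
  {X : Type u} [TopologicalSpace X] {x₀ : X}

lemma IsTGClosed.comap {Y : Type u} [TopologicalSpace Y] {y₀ : Y}
    {K : Subgroup (FundamentalGroup Y y₀)} (hK : IsTGClosed t₀ Tsub g y₀ K)
    (f : C(X, Y)) (hf : f x₀ = y₀) :
    IsTGClosed t₀ Tsub g x₀ (K.comap (inducedHom f x₀ hf)) := by
  intro φ hφ hle
  rw [Subgroup.mem_comap, ← MonoidHom.comp_apply, inducedHom_comp]
  apply hK
  rw [← inducedHom_comp φ f t₀ hφ hf, ← Subgroup.map_map]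
  exact Subgroup.map_le_iff_le_comap.mpr hle

lemma le_tgClosure (H : Subgroup (FundamentalGroup X x₀)) :
    H ≤ tgClosure t₀ Tsub g x₀ H :=
  le_sInf fun _ hK ↦ hK.2

lemma tgClosure_le {H K : Subgroup (FundamentalGroup X x₀)}
    (hK : IsTGClosed t₀ Tsub g x₀ K) (hHK : H ≤ K) : tgClosure t₀ Tsub g x₀ H ≤ K :=
  sInf_le ⟨hK, hHK⟩

lemma isTGClosed_tgClosure (H : Subgroup (FundamentalGroup X x₀)) :
    IsTGClosed t₀ Tsub g x₀ (tgClosure t₀ Tsub g x₀ H) := by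
  intro φ hφ hle
  exact Subgroup.mem_sInf.mpr fun K hK ↦ hK.1 φ hφ (hle.trans (sInf_le hK))

end Closure

theorem stmt0 {T : Type u} [TopologicalSpace T] (t₀ : T)
    (Tsub : Subgroup (FundamentalGroup T t₀)) (g : FundamentalGroup T t₀)
    {X Y : Type u} [TopologicalSpace X] [TopologicalSpace Y]
    (f : C(X, Y)) (x₀ : X) (y₀ : Y) (hf : f x₀ = y₀)
    (H : Subgroup (FundamentalGroup X x₀)) :
    Subgroup.map (inducedHom f x₀ hf) (tgClosure t₀ Tsub g x₀ H) ≤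
      tgClosure t₀ Tsub g y₀ (Subgroup.map (inducedHom f x₀ hf) H) := by
  rw [Subgroup.map_le_iff_le_comap]
  exact tgClosure_le ((isTGClosed_tgClosure _).comap f hf)
    (Subgroup.map_le_iff_le_comap.mp (le_tgClosure _))
end
end

section
/- If (T,g) is a normal closure pair for a based space (𝕋,t₀), then the closure operator cl_{T,g} commutes with path conjugation: for every based space (X,x₀), every subgroup H ≤ π₁(X,x₀), and every path α in X with α(0) = x₀, one has cl_{T,g}(H^α) = (cl_{T,g}(H))^α as subgroups of π₁(X,α(1)). -/
open CategoryTheory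

noncomputable section

universe u

attribute [local instance] Path.Homotopic.setoid

/-- A closure pair `(T,g)` is normal if, for every based space `(X,x₀)` and every
subgroup `H ≤ π₁(X,x₀)`, `H` is `(T,g)`-closed if and only if all of its path-conjugates
`H^α` are `(T,g)`-closed. -/
def IsNormalClosurePair {T : Type u} [TopologicalSpace T] (t₀ : T)
    (Tsub : Subgroup (FundamentalGroup T t₀)) (g : FundamentalGroup T t₀) : Prop :=
  ∀ (X : Type u) [TopologicalSpace X] (x₀ : X) (H : Subgroup (FundamentalGroup X x₀)),
    IsTGClosed t₀ Tsub g x₀ H ↔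
      ∀ (x : X) (α : Path x₀ x), IsTGClosed t₀ Tsub g x (conjSubgroup α H)

/-!
Since `H ↦ H^α` is induced by the group isomorphism `π₁(X,x₀) ≃* π₁(X,α 1)`, it is an order
isomorphism of subgroup lattices and so preserves infima. Normality of `(T,g)`, applied along
`α` and along `α⁻`, says it maps the `(T,g)`-closed subgroups at `x₀` exactly onto those at
`α 1`; hence it carries the family intersected in `cl_{T,g}(H)` onto the family intersected in
`cl_{T,g}(H^α)`.
-/

theorem OrderIso.map_sInf_setOf_and_le {α β : Type*} [CompleteLattice α] [CompleteLattice β]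
    (e : α ≃o β) {P : α → Prop} {Q : β → Prop} (hPQ : ∀ a, Q (e a) ↔ P a) (a : α) :
    e (sInf {a' | P a' ∧ a ≤ a'}) = sInf {b | Q b ∧ e a ≤ b} := by
  rw [sInfHomClass.map_sInf]
  refine congrArg sInf (Set.ext fun b => ⟨?_, ?_⟩)
  · rintro ⟨a', ⟨hP, hle⟩, rfl⟩
    exact ⟨(hPQ a').2 hP, e.monotone hle⟩
  · rintro ⟨hQ, hle⟩
    refine ⟨e.symm b, ⟨?_, e.le_symm_apply.2 hle⟩, e.apply_symm_apply b⟩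
    rwa [← hPQ, e.apply_symm_apply]

theorem conjSubgroup_eq_mapSubgroup {X : Type u} [TopologicalSpace X] {x y : X} (α : Path x y) :
    conjSubgroup α = (pathConjEquiv α).mapSubgroup :=
  rfl

theorem pathConjEquiv_symm {X : Type u} [TopologicalSpace X] {x y : X} (α : Path x y) :
    pathConjEquiv α.symm = (pathConjEquiv α).symm := by
  ext a
  show ((Groupoid.isoEquivHom _ _).symm ⟦α.symm⟧).conj a =
    ((Groupoid.isoEquivHom _ _).symm ⟦α⟧).conj.symm a
  have hinv : Groupoid.inv (show FundamentalGroupoid.mk x ⟶ FundamentalGroupoid.mk y from ⟦α⟧) =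
      (show FundamentalGroupoid.mk y ⟶ FundamentalGroupoid.mk x from ⟦α.symm⟧) := rfl
  rw [MulEquiv.eq_symm_apply, Iso.conj_apply, Iso.conj_apply]
  simp [← hinv, Groupoid.inv_eq_inv]

theorem conjSubgroup_symm_conjSubgroup {X : Type u} [TopologicalSpace X] {x y : X}
    (α : Path x y) (H : Subgroup (FundamentalGroup X x)) :
    conjSubgroup α.symm (conjSubgroup α H) = H := by
  rw [conjSubgroup_eq_mapSubgroup, conjSubgroup_eq_mapSubgroup, pathConjEquiv_symm,
    ← MulEquiv.symm_mapSubgroup, OrderIso.symm_apply_apply]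

theorem IsNormalClosurePair.isTGClosed_conjSubgroup_iff {T : Type u} [TopologicalSpace T]
    {t₀ : T} {Tsub : Subgroup (FundamentalGroup T t₀)} {g : FundamentalGroup T t₀}
    (hnormal : IsNormalClosurePair t₀ Tsub g) {X : Type u} [TopologicalSpace X] {x₀ x : X}
    (α : Path x₀ x) (K : Subgroup (FundamentalGroup X x₀)) :
    IsTGClosed t₀ Tsub g x (conjSubgroup α K) ↔ IsTGClosed t₀ Tsub g x₀ K := by
  refine ⟨fun hK => ?_, fun hK => (hnormal X x₀ K).mp hK x α⟩
  simpa only [conjSubgroup_symm_conjSubgroup] using (hnormal X x _).mp hK x₀ α.symm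

theorem stmt2 {T : Type u} [TopologicalSpace T] (t₀ : T)
    (Tsub : Subgroup (FundamentalGroup T t₀)) (g : FundamentalGroup T t₀)
    (hnormal : IsNormalClosurePair t₀ Tsub g)
    {X : Type u} [TopologicalSpace X] (x₀ : X)
    (H : Subgroup (FundamentalGroup X x₀)) (x : X) (α : Path x₀ x) :
    tgClosure t₀ Tsub g x (conjSubgroup α H) =
      conjSubgroup α (tgClosure t₀ Tsub g x₀ H) :=
  (OrderIso.map_sInf_setOf_and_le (pathConjEquiv α).mapSubgroup
    (hnormal.isTGClosed_conjSubgroup_iff α) H).symm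
end
end

section
/- Let X be a path-connected topological space with basepoint x₀. If a subgroup H ≤ π₁(X,x₀) is (P,p_τ)-closed, then H is (C,c_τ)-closed. -/
open CategoryTheory

noncomputable section

universe u

attribute [local instance] Path.Homotopic.setoid

/-- Equality of right cosets `H·a = H·b`. -/
def rightCosetEq {G : Type*} [Group G] (H : Subgroup G) (a b : G) : Prop :=
  (fun h => h * a) '' (H : Set G) = (fun h => h * b) '' (H : Set G)

/-! ### The Hawaiian earring `ℍ` and the space `ℍ⁺` obtained by attaching a whisker -/

/-- The Hawaiian earring `ℍ ⊆ ℝ²`: the union of the circles of radius `1/n`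
centered at `(1/n, 0)` for `n ≥ 1`. -/
def HEset : Set (ℝ × ℝ) :=
  {p | ∃ n : ℕ, 0 < n ∧ (p.1 - 1 / n) ^ 2 + p.2 ^ 2 = (1 / n) ^ 2}

/-- The space `ℍ⁺ = ℍ ∪ ([-1,0] × {0})`. -/
def HEP : Set (ℝ × ℝ) := (Set.Icc (-1 : ℝ) 0 ×ˢ ({0} : Set ℝ)) ∪ HEset

/-- The basepoint `b₀⁺ = (-1, 0)` of `ℍ⁺`. -/
def bPlus : HEP := ⟨(-1, 0), Or.inl ⟨⟨le_refl _, by norm_num⟩, rfl⟩⟩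

/-- The point `b₀ = (0, 0)` of `ℍ⁺`. -/
def bZero : HEP := ⟨(0, 0), Or.inl ⟨⟨by norm_num, le_refl _⟩, rfl⟩⟩

/-- The canonical parametrization of the `n`-th circle of the Hawaiian earring,
starting and ending at the origin and traversing `C_n` counterclockwise. -/
def ellFun (n : ℕ) (t : ℝ) : ℝ × ℝ :=
  ((1 - Real.cos (2 * Real.pi * t)) / n, -Real.sin (2 * Real.pi * t) / n)

lemma ellFun_mem (n : ℕ) (t : ℝ) : ellFun n t ∈ HEP := by
  rcases Nat.eq_zero_or_pos n with h | h
  · subst h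
    refine Or.inr ⟨1, one_pos, ?_⟩
    simp [ellFun]
  · refine Or.inr ⟨n, h, ?_⟩
    have hn : (n : ℝ) ≠ 0 := Nat.cast_ne_zero.mpr h.ne'
    have hs := Real.sin_sq_add_cos_sq (2 * Real.pi * t)
    simp only [ellFun]
    field_simp
    all_goals nlinarith [hs]

/-- The path `ι : [0,1] → ℍ⁺`, `ι(t) = (t - 1, 0)`, from `b₀⁺` to `b₀`. -/
def iotaPath : Path bPlus bZero where
  toFun t := ⟨((t : ℝ) - 1, 0),
    Or.inl ⟨⟨show (-1 : ℝ) ≤ (t : ℝ) - 1 by linarith [t.2.1],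
      show ((t : ℝ) - 1 : ℝ) ≤ 0 by linarith [t.2.2]⟩, rfl⟩⟩
  continuous_toFun := by
    apply Continuous.subtype_mk
    fun_prop
  source' := by
    apply Subtype.ext
    norm_num [bPlus]
  target' := by
    apply Subtype.ext
    norm_num [bZero]

/-- The loop `ℓ_n` traversing the `n`-th circle of `ℍ`, as a loop in `ℍ⁺` based at `b₀`. -/
def ellLoop (n : ℕ) : Path bZero bZero where
  toFun t := ⟨ellFun n t, ellFun_mem n t⟩
  continuous_toFun := by
    apply Continuous.subtype_mk
    simp only [ellFun]
    fun_prop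
  source' := by
    apply Subtype.ext
    norm_num [ellFun, bZero]
  target' := by
    apply Subtype.ext
    norm_num [ellFun, bZero, Real.cos_two_pi, Real.sin_two_pi]

/-- The element `cₙ = [ι · ℓₙ · ι⁻] ∈ π₁(ℍ⁺, b₀⁺)`. -/
def cElem (n : ℕ) : FundamentalGroup HEP bPlus :=
  loopClass ((iotaPath.trans (ellLoop n)).trans iotaPath.symm)

/-- The subgroup `C = ⟨cₙ : n ≥ 1⟩ ≤ π₁(ℍ⁺, b₀⁺)`. -/
def Csub : Subgroup (FundamentalGroup HEP bPlus) :=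
  Subgroup.closure {g | ∃ n : ℕ, 0 < n ∧ g = cElem n}

/-- Specification of the infinite concatenation `ℓ_∞ = ℓ₁·ℓ₂·ℓ₃·⋯` : it equals `ℓ_n`,
affinely reparametrized, on the interval `[(n-1)/n, n/(n+1)]`. -/
def EllInfSpec (ℓ : Path bZero bZero) : Prop :=
  ∀ n : ℕ, 0 < n → ∀ t : unitInterval,
    ((n : ℝ) - 1) / n ≤ (t : ℝ) → (t : ℝ) ≤ (n : ℝ) / (n + 1) →
    (↑(ℓ t) : ℝ × ℝ) = ellFun n (((t : ℝ) - ((n : ℝ) - 1) / n) * (n * (n + 1)))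

/-- The element `c_∞ = [ι · ℓ_∞ · ι⁻] ∈ π₁(ℍ⁺, b₀⁺)`. -/
def cInf (ℓ : Path bZero bZero) : FundamentalGroup HEP bPlus :=
  loopClass ((iotaPath.trans ℓ).trans iotaPath.symm)

/-- The left endpoint of the `k`-th open middle-third interval of level `n` in the
complement of the Cantor set (`n ≥ 1`, `1 ≤ k ≤ 2^(n-1)`, intervals of length `3⁻ⁿ`,
indexed in their natural order in `[0,1]`). -/
def cantorLeft (n k : ℕ) : ℝ :=
  (∑ j ∈ Finset.range (n - 1),
    (if Nat.testBit (k - 1) (n - 2 - j) then (2 : ℝ) else 0) / 3 ^ (j + 1)) + 1 / 3 ^ n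

/-- Specification of a "transfinite concatenation" loop: it sends the middle-third
Cantor set to `b₀` and traverses `ℓ_{m(2^(n-1)+k-1)}`, affinely reparametrized, on the
closure of the `k`-th open complementary interval of length `3⁻ⁿ`.  Taking `m = id`
yields the loop `ℓ_τ`. -/
def TauSpec (m : ℕ → ℕ) (ℓ : Path bZero bZero) : Prop :=
  (∀ n k : ℕ, 0 < n → 1 ≤ k → k ≤ 2 ^ (n - 1) → ∀ t : unitInterval,
      cantorLeft n k ≤ (t : ℝ) → (t : ℝ) ≤ cantorLeft n k + 1 / 3 ^ n →
      (↑(ℓ t) : ℝ × ℝ) =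
        ellFun (m (2 ^ (n - 1) + k - 1)) (((t : ℝ) - cantorLeft n k) * 3 ^ n)) ∧
  (∀ t : unitInterval,
      (∀ n k : ℕ, 0 < n → 1 ≤ k → k ≤ 2 ^ (n - 1) →
        (t : ℝ) ≤ cantorLeft n k ∨ cantorLeft n k + 1 / 3 ^ n ≤ (t : ℝ)) →
      (↑(ℓ t) : ℝ × ℝ) = (0, 0))

/-- Specification of the transfinite concatenation `ℓ_τ`. -/
def EllTauSpec (ℓ : Path bZero bZero) : Prop := TauSpec id ℓ

/-- The element `c_τ = [ι · ℓ_τ · ι⁻] ∈ π₁(ℍ⁺, b₀⁺)`. -/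
def cTau (ℓ : Path bZero bZero) : FundamentalGroup HEP bPlus :=
  loopClass ((iotaPath.trans ℓ).trans iotaPath.symm)

/-- The element `pₙ = [ι · ℓ_{2n-1} · ℓ_{2n}⁻ · ι⁻] ∈ π₁(ℍ⁺, b₀⁺)`. -/
def pElem (n : ℕ) : FundamentalGroup HEP bPlus :=
  loopClass ((iotaPath.trans ((ellLoop (2 * n - 1)).trans (ellLoop (2 * n)).symm)).trans
    iotaPath.symm)

/-- The subgroup `P = ⟨pₙ : n ≥ 1⟩ ≤ π₁(ℍ⁺, b₀⁺)`. -/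
def Psub : Subgroup (FundamentalGroup HEP bPlus) :=
  Subgroup.closure {g | ∃ n : ℕ, 0 < n ∧ g = pElem n}

/-- Specification of `f_odd ∘ ℓ_τ`, where `f_odd : ℍ → ℍ` satisfies
`f_odd ∘ ℓ_n = ℓ_{2n-1}`. -/
def OddTauSpec (ℓ : Path bZero bZero) : Prop := TauSpec (fun m => 2 * m - 1) ℓ

/-- Specification of `f_even ∘ ℓ_τ`, where `f_even : ℍ → ℍ` satisfies
`f_even ∘ ℓ_n = ℓ_{2n}`. -/
def EvenTauSpec (ℓ : Path bZero bZero) : Prop := TauSpec (fun m => 2 * m) ℓ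

/-- The element `p_τ = [ι · (f_odd∘ℓ_τ) · (f_even∘ℓ_τ)⁻ · ι⁻] ∈ π₁(ℍ⁺, b₀⁺)`. -/
def pTau (ℓodd ℓeven : Path bZero bZero) : FundamentalGroup HEP bPlus :=
  loopClass ((iotaPath.trans (ℓodd.trans ℓeven.symm)).trans iotaPath.symm)

/-!
The map `d : ℍ⁺ → ℍ⁺` that fixes the whisker, dilates `C_{2m-1}` onto `C_m` and collapses every
`C_{2m}` to `b₀` is continuous (at `b₀` because it at most doubles norms), and it sends `pₙ` to
`cₙ` and `p_τ` to `c_τ`. So if `f_#(C) ≤ H`, then `(f ∘ d)_#(P) ≤ H`, and `(P, p_τ)`-closedness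
gives `f_#(c_τ) = (f ∘ d)_#(p_τ) ∈ H`.
-/

section InducedHom

variable {Z W V : Type u} [TopologicalSpace Z] [TopologicalSpace W] [TopologicalSpace V]

lemma loopClass_eq_of_homotopic {z : Z} {γ γ' : Path z z} (h : γ.Homotopic γ') :
    loopClass γ = loopClass γ' :=
  congrArg (fun q => FundamentalGroup.fromPath (X := TopCat.of Z) q) (Quotient.sound h)

lemma inducedHom_loopClass (f : C(Z, W)) {z : Z} {w : W} (h : f z = w) {γ : Path z z}
    {γ' : Path w w} (hγ : ∀ t, f (γ t) = γ' t) :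
    inducedHom f z h (loopClass γ) = loopClass γ' := by
  subst h
  obtain rfl : γ.map f.continuous = γ' := Path.ext (funext hγ)
  rfl

lemma inducedHom_comp_s8 (f : C(Z, W)) (g : C(W, V)) {z : Z} {w : W} {v : V}
    (hf : f z = w) (hg : g w = v) :
    inducedHom (g.comp f) z (by rw [ContinuousMap.comp_apply, hf, hg]) =
      (inducedHom g w hg).comp (inducedHom f z hf) := by
  subst hf hg
  ext a
  induction a using Quotient.inductionOn with
  | h γ => rfl

end InducedHom

lemma IsTGClosed.of_map {T T' : Type u} [TopologicalSpace T] [TopologicalSpace T']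
    {t₀ : T} {t₀' : T'} {S : Subgroup (FundamentalGroup T t₀)} {g : FundamentalGroup T t₀}
    {S' : Subgroup (FundamentalGroup T' t₀')} {g' : FundamentalGroup T' t₀'}
    (d : C(T, T')) (hd : d t₀ = t₀') (hS : S.map (inducedHom d t₀ hd) ≤ S')
    (hg : inducedHom d t₀ hd g = g') {X : Type u} [TopologicalSpace X] {x₀ : X}
    {H : Subgroup (FundamentalGroup X x₀)} (hH : IsTGClosed t₀ S g x₀ H) :
    IsTGClosed t₀' S' g' x₀ H := by
  intro f hf hS'
  have hfd := inducedHom_comp_s8 d f hd hf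
  have := hH (f.comp d) _ <| by
    rw [hfd, ← Subgroup.map_map]
    exact (Subgroup.map_mono hS).trans hS'
  rwa [hfd, MonoidHom.comp_apply, hg] at this

section PathApply

variable {Z W : Type*} [TopologicalSpace Z] [TopologicalSpace W] {f : Z → W}
  {x y z : Z} {x' y' z' : W}

lemma apply_trans_eq {p : Path x y} {q : Path y z} {p' : Path x' y'} {q' : Path y' z'}
    (hp : ∀ t, f (p t) = p' t) (hq : ∀ t, f (q t) = q' t) (t : unitInterval) :
    f (p.trans q t) = p'.trans q' t := by
  rw [Path.trans_apply, Path.trans_apply]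
  split_ifs
  exacts [hp _, hq _]

lemma apply_symm_eq {p : Path x y} {p' : Path x' y'} (hp : ∀ t, f (p t) = p' t)
    (t : unitInterval) : f (p.symm t) = p'.symm t :=
  hp _

end PathApply

open Filter Topology

lemma mem_HEset_iff {p : ℝ × ℝ} :
    p ∈ HEset ↔ ∃ n : ℕ, 0 < n ∧ p.1 ^ 2 + p.2 ^ 2 = 2 * p.1 / n := by
  refine exists_congr fun n => and_congr_right fun _ => ?_
  constructor <;> intro h <;> linear_combination h

lemma ellFun_sq_add_sq (n : ℕ) (t : ℝ) :
    (ellFun n t).1 ^ 2 + (ellFun n t).2 ^ 2 = 2 * (ellFun n t).1 / n := by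
  simp only [ellFun]
  linear_combination (Real.sin_sq_add_cos_sq (2 * Real.pi * t)) / (n : ℝ) ^ 2

lemma eq_zero_of_sq_add_sq_eq {p : ℝ × ℝ} {n : ℕ}
    (hp : p.1 ^ 2 + p.2 ^ 2 = 2 * p.1 / n) (hx : p.1 ≤ 0) : p = 0 := by
  have : 2 * p.1 / n ≤ 0 := div_nonpos_of_nonpos_of_nonneg (by linarith) n.cast_nonneg
  ext <;> simp only [Prod.fst_zero, Prod.snd_zero] <;> nlinarith [sq_nonneg p.1, sq_nonneg p.2]

/-- On the circle `x² + y² = 2x/n` (that is, `C_n`), away from the origin, this recovers `n`. -/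
def circleIndex (p : ℝ × ℝ) : ℝ := 2 * p.1 / (p.1 ^ 2 + p.2 ^ 2)

lemma circleIndex_eq {p : ℝ × ℝ} {n : ℕ} (hn : 0 < n) (hp : p.1 ^ 2 + p.2 ^ 2 = 2 * p.1 / n)
    (hx : 0 < p.1) : circleIndex p = n := by
  have : (0 : ℝ) < n := by exact_mod_cast hn
  rw [circleIndex, hp]
  field_simp

def collapseFactor (n : ℤ) : ℝ := if Even n then 0 else 2 * n / (n + 1)

lemma abs_collapseFactor_le {n : ℤ} (hn : 0 ≤ n) : |collapseFactor n| ≤ 2 := by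
  have : (0 : ℝ) ≤ n := by exact_mod_cast hn
  unfold collapseFactor
  split_ifs
  · norm_num
  · rw [abs_of_nonneg (by positivity), div_le_iff₀ (by positivity)]
    linarith

lemma collapseFactor_odd {m : ℕ} (hm : 0 < m) :
    collapseFactor (2 * m - 1 : ℕ) = (2 * m - 1) / m := by
  have hodd : ¬ Even ((2 * m - 1 : ℕ) : ℤ) := by
    rw [Int.even_coe_nat, Nat.not_even_iff_odd]; exact ⟨m - 1, by omega⟩
  rw [collapseFactor, if_neg hodd, Int.cast_natCast, Nat.cast_sub (by omega)]
  push_cast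
  ring_nf

lemma collapseFactor_smul_ellFun_odd {m : ℕ} (hm : 0 < m) (t : ℝ) :
    collapseFactor (2 * m - 1 : ℕ) • ellFun (2 * m - 1) t = ellFun m t := by
  have : (1 : ℝ) ≤ m := by exact_mod_cast hm
  have : (2 * m - 1 : ℝ) ≠ 0 := by linarith
  rw [collapseFactor_odd hm]
  simp only [ellFun, Prod.smul_mk, smul_eq_mul, Nat.cast_sub (by omega : 1 ≤ 2 * m)]
  ext <;> push_cast <;> field_simp

lemma collapseFactor_even (m : ℕ) : collapseFactor (2 * m : ℕ) = 0 :=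
  if_pos (by rw [Int.even_coe_nat]; exact even_two_mul m)

/-- The map `d`: the identity on `x ≤ 0`, the dilation of `C_{2m-1}` onto `C_m`, and the collapse
of `C_{2m}` to the origin. -/
def collapseEven (p : ℝ × ℝ) : ℝ × ℝ :=
  if p.1 ≤ 0 then p else collapseFactor (round (circleIndex p)) • p

lemma collapseEven_of_nonpos {p : ℝ × ℝ} (hx : p.1 ≤ 0) : collapseEven p = p := if_pos hx

lemma collapseEven_of_sq_add_sq_eq {p : ℝ × ℝ} {n : ℕ} (hn : 0 < n)
    (hp : p.1 ^ 2 + p.2 ^ 2 = 2 * p.1 / n) : collapseEven p = collapseFactor n • p := by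
  by_cases hx : p.1 ≤ 0
  · rw [collapseEven_of_nonpos hx, eq_zero_of_sq_add_sq_eq hp hx, smul_zero]
  · rw [collapseEven, if_neg hx, circleIndex_eq hn hp (not_le.mp hx), round_natCast]

lemma collapseEven_ellFun_odd {m : ℕ} (hm : 0 < m) (t : ℝ) :
    collapseEven (ellFun (2 * m - 1) t) = ellFun m t := by
  rw [collapseEven_of_sq_add_sq_eq (by omega) (ellFun_sq_add_sq _ t),
    collapseFactor_smul_ellFun_odd hm]

lemma collapseEven_ellFun_even {m : ℕ} (hm : 0 < m) (t : ℝ) :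
    collapseEven (ellFun (2 * m) t) = 0 := by
  rw [collapseEven_of_sq_add_sq_eq (by omega) (ellFun_sq_add_sq _ t), collapseFactor_even,
    zero_smul]

lemma collapseEven_mem {p : ℝ × ℝ} (hp : p ∈ HEP) : collapseEven p ∈ HEP := by
  by_cases hx : p.1 ≤ 0
  · rwa [collapseEven_of_nonpos hx]
  obtain ⟨n, hn, hpn⟩ := mem_HEset_iff.mp (hp.resolve_left fun h => hx h.1.2)
  rw [collapseEven_of_sq_add_sq_eq hn hpn]
  by_cases heven : Even n
  · obtain ⟨m, rfl⟩ := heven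
    rw [← two_mul, collapseFactor_even, zero_smul]
    exact Or.inl ⟨⟨by norm_num, le_rfl⟩, rfl⟩
  -- the dilation by `(2j - 1) / j` carries `C_{2j-1}` onto `C_j`
  obtain ⟨j, rfl⟩ : ∃ j, n = 2 * j - 1 := ⟨(n + 1) / 2, by grind⟩
  have hj : 0 < j := by omega
  refine Or.inr (mem_HEset_iff.mpr ⟨j, hj, ?_⟩)
  have : (1 : ℝ) ≤ j := by exact_mod_cast hj
  have : (2 * j - 1 : ℝ) ≠ 0 := by linarith
  rw [Nat.cast_sub (by omega)] at hpn
  push_cast at hpn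
  simp only [collapseFactor_odd hj, Prod.smul_fst, Prod.smul_snd, smul_eq_mul]
  field_simp at hpn ⊢
  linear_combination hpn

lemma norm_collapseEven_le (p : ℝ × ℝ) : ‖collapseEven p‖ ≤ 2 * ‖p‖ := by
  by_cases hx : p.1 ≤ 0
  · rw [collapseEven_of_nonpos hx]
    linarith [norm_nonneg p]
  have hidx : 0 ≤ circleIndex p := by
    unfold circleIndex
    have := not_le.mp hx
    positivity
  rw [collapseEven, if_neg hx, norm_smul, Real.norm_eq_abs]
  gcongr
  refine abs_collapseFactor_le ?_
  rw [round_eq]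
  exact Int.floor_nonneg.mpr (by linarith)

lemma collapseEven_eventuallyEq {p : ℝ × ℝ} {n : ℕ} (hn : 0 < n)
    (hp : p.1 ^ 2 + p.2 ^ 2 = 2 * p.1 / n) (hx : 0 < p.1) :
    collapseEven =ᶠ[𝓝 p] (collapseFactor n • ·) := by
  have hcont : ContinuousAt circleIndex p := by
    unfold circleIndex
    exact ContinuousAt.div (by fun_prop) (by fun_prop) (by positivity)
  have hnear : ∀ᶠ q in 𝓝 p, circleIndex q ∈ Set.Ioo ((n : ℝ) - 1 / 2) (n + 1 / 2) :=
    hcont.eventually_mem <| Ioo_mem_nhds (by rw [circleIndex_eq hn hp hx]; linarith)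
      (by rw [circleIndex_eq hn hp hx]; linarith)
  filter_upwards [hnear, (continuous_fst.isOpen_preimage _ isOpen_Ioi).mem_nhds hx]
    with q hq hqx
  have : round (circleIndex q) = n :=
    round_eq_iff.mpr (by exact_mod_cast Set.Ioo_subset_Ico_self hq)
  rw [collapseEven, if_neg (not_le.mpr hqx), this]

lemma continuousOn_collapseEven : ContinuousOn collapseEven HEP := by
  intro p hp
  rcases lt_trichotomy p.1 0 with hx | hx | hx
  · refine (continuousAt_id.congr ?_).continuousWithinAt
    filter_upwards [(continuous_fst.isOpen_preimage _ isOpen_Iio).mem_nhds hx] with q hq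
    exact (collapseEven_of_nonpos (le_of_lt hq)).symm
  · obtain rfl : p = 0 := by
      rcases hp with h | h
      · exact Prod.ext hx h.2
      · obtain ⟨n, -, hpn⟩ := mem_HEset_iff.mp h
        exact eq_zero_of_sq_add_sq_eq hpn hx.le
    refine ContinuousAt.continuousWithinAt ?_
    rw [ContinuousAt, collapseEven_of_nonpos le_rfl]
    refine squeeze_zero_norm norm_collapseEven_le ?_
    simpa using (continuous_norm.tendsto (0 : ℝ × ℝ)).const_mul 2
  · obtain ⟨n, hn, hpn⟩ := mem_HEset_iff.mp (hp.resolve_left fun h => hx.not_ge h.1.2)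
    exact ((continuous_const_smul _).continuousAt.congr
      (collapseEven_eventuallyEq hn hpn hx).symm).continuousWithinAt

def collapseEvenMap : C(HEP, HEP) :=
  ⟨fun q => ⟨collapseEven q, collapseEven_mem q.2⟩,
    continuousOn_collapseEven.domRestrict.subtype_mk _⟩

lemma collapseEvenMap_bPlus : collapseEvenMap bPlus = bPlus :=
  Subtype.ext (collapseEven_of_nonpos (by norm_num [bPlus]))

lemma collapseEvenMap_iotaPath (t : unitInterval) : collapseEvenMap (iotaPath t) = iotaPath t :=
  Subtype.ext (collapseEven_of_nonpos (by simp [iotaPath, t.2.2]))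

lemma collapseEvenMap_ellLoop_odd {m : ℕ} (hm : 0 < m) (t : unitInterval) :
    collapseEvenMap (ellLoop (2 * m - 1) t) = ellLoop m t :=
  Subtype.ext (collapseEven_ellFun_odd hm t)

lemma collapseEvenMap_ellLoop_even {m : ℕ} (hm : 0 < m) (t : unitInterval) :
    collapseEvenMap (ellLoop (2 * m) t) = Path.refl bZero t :=
  Subtype.ext (collapseEven_ellFun_even hm t)

/-- `cₙ`, `c_τ`, `pₙ` and `p_τ` are all of this form. -/
def whiskerClass (γ : Path bZero bZero) : FundamentalGroup HEP bPlus :=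
  loopClass ((iotaPath.trans γ).trans iotaPath.symm)

lemma whiskerClass_trans_refl_symm (γ : Path bZero bZero) :
    whiskerClass (γ.trans (Path.refl bZero).symm) = whiskerClass γ := by
  refine loopClass_eq_of_homotopic (.hcomp (.hcomp (.refl _) ?_) (.refl _))
  rw [Path.refl_symm]
  exact ⟨.transRefl γ⟩

lemma inducedHom_collapseEvenMap_whiskerClass {γ γ' : Path bZero bZero}
    (h : ∀ t, collapseEvenMap (γ t) = γ' t) :
    inducedHom collapseEvenMap bPlus collapseEvenMap_bPlus (whiskerClass γ) =
      whiskerClass γ' :=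
  inducedHom_loopClass _ _ <| apply_trans_eq (apply_trans_eq collapseEvenMap_iotaPath h)
    (apply_symm_eq collapseEvenMap_iotaPath)

lemma inducedHom_collapseEvenMap_pElem {n : ℕ} (hn : 0 < n) :
    inducedHom collapseEvenMap bPlus collapseEvenMap_bPlus (pElem n) = cElem n := by
  rw [pElem, ← whiskerClass, inducedHom_collapseEvenMap_whiskerClass
    (apply_trans_eq (collapseEvenMap_ellLoop_odd hn)
      (apply_symm_eq (collapseEvenMap_ellLoop_even hn))), whiskerClass_trans_refl_symm]
  rfl

lemma inducedHom_collapseEvenMap_Psub_le :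
    Psub.map (inducedHom collapseEvenMap bPlus collapseEvenMap_bPlus) ≤ Csub := by
  rw [Psub, MonoidHom.map_closure, Subgroup.closure_le]
  rintro _ ⟨_, ⟨n, hn, rfl⟩, rfl⟩
  rw [SetLike.mem_coe, inducedHom_collapseEvenMap_pElem hn]
  exact Subgroup.subset_closure ⟨n, hn, rfl⟩

lemma tauSpec_apply_cases (t : unitInterval) :
    (∀ m ℓ, TauSpec m ℓ → (ℓ t : ℝ × ℝ) = 0) ∨
      ∃ i, 0 < i ∧ ∃ s : ℝ, ∀ m ℓ, TauSpec m ℓ → (ℓ t : ℝ × ℝ) = ellFun (m i) s := by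
  by_cases h : ∀ n k : ℕ, 0 < n → 1 ≤ k → k ≤ 2 ^ (n - 1) →
      (t : ℝ) ≤ cantorLeft n k ∨ cantorLeft n k + 1 / 3 ^ n ≤ (t : ℝ)
  · exact .inl fun m ℓ hℓ => hℓ.2 t h
  push Not at h
  obtain ⟨n, k, hn, hk1, hk2, h1, h2⟩ := h
  exact .inr ⟨2 ^ (n - 1) + k - 1, by omega, _, fun m ℓ hℓ => hℓ.1 n k hn hk1 hk2 t h1.le h2.le⟩

section Tau

variable {ellTau oddTau evenTau : Path bZero bZero}

lemma collapseEvenMap_oddTau (hTau : EllTauSpec ellTau) (hodd : OddTauSpec oddTau)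
    (t : unitInterval) : collapseEvenMap (oddTau t) = ellTau t := by
  refine Subtype.ext ?_
  change collapseEven (oddTau t) = ellTau t
  rcases tauSpec_apply_cases t with h | ⟨i, hi, s, h⟩
  · rw [h _ _ hodd, h _ _ hTau]
    exact collapseEven_of_nonpos le_rfl
  · rw [h _ _ hodd, h _ _ hTau]
    exact collapseEven_ellFun_odd hi s

lemma collapseEvenMap_evenTau (heven : EvenTauSpec evenTau) (t : unitInterval) :
    collapseEvenMap (evenTau t) = Path.refl bZero t := by
  refine Subtype.ext ?_
  change collapseEven (evenTau t) = 0
  rcases tauSpec_apply_cases t with h | ⟨i, hi, s, h⟩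
  · rw [h _ _ heven]
    exact collapseEven_of_nonpos le_rfl
  · rw [h _ _ heven]
    exact collapseEven_ellFun_even hi s

lemma inducedHom_collapseEvenMap_pTau (hTau : EllTauSpec ellTau) (hodd : OddTauSpec oddTau)
    (heven : EvenTauSpec evenTau) :
    inducedHom collapseEvenMap bPlus collapseEvenMap_bPlus (pTau oddTau evenTau) =
      cTau ellTau := by
  rw [pTau, ← whiskerClass, inducedHom_collapseEvenMap_whiskerClass
    (apply_trans_eq (collapseEvenMap_oddTau hTau hodd)
      (apply_symm_eq (collapseEvenMap_evenTau heven))), whiskerClass_trans_refl_symm]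
  rfl

end Tau

theorem stmt8_general {X : Type} [TopologicalSpace X] (x₀ : X)
    (H : Subgroup (FundamentalGroup X x₀))
    (ellTau : Path bZero bZero) (hTau : EllTauSpec ellTau)
    (oddTau : Path bZero bZero) (hodd : OddTauSpec oddTau)
    (evenTau : Path bZero bZero) (heven : EvenTauSpec evenTau) :
    IsTGClosed bPlus Psub (pTau oddTau evenTau) x₀ H →
      IsTGClosed bPlus Csub (cTau ellTau) x₀ H :=
  IsTGClosed.of_map collapseEvenMap collapseEvenMap_bPlus inducedHom_collapseEvenMap_Psub_le
    (inducedHom_collapseEvenMap_pTau hTau hodd heven)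

/-- If `H ≤ π₁(X,x₀)` is `(P, p_τ)`-closed then `H` is `(C, c_τ)`-closed. -/
theorem stmt8 {X : Type} [TopologicalSpace X] [PathConnectedSpace X] (x₀ : X)
    (H : Subgroup (FundamentalGroup X x₀))
    (ellTau : Path bZero bZero) (hTau : EllTauSpec ellTau)
    (oddTau : Path bZero bZero) (hodd : OddTauSpec oddTau)
    (evenTau : Path bZero bZero) (heven : EvenTauSpec evenTau) :
    IsTGClosed bPlus Psub (pTau oddTau evenTau) x₀ H →
      IsTGClosed bPlus Csub (cTau ellTau) x₀ H :=
  stmt8_general x₀ H ellTau hTau oddTau hodd evenTau heven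
end
end

section
/- Suppose X is a path-connected metric space with basepoint x₀ and N ≤ H ≤ π₁(X,x₀), where N is a normal subgroup of π₁(X,x₀) and p_N : X̃_N → X has the unique path lifting property. If for every point x ∈ X there is an open neighborhood U of x such that π(x,U) ∩ H ≤ N, then p_H : X̃_H → X has the unique path lifting property. -/
open CategoryTheory

noncomputable section

universe u

attribute [local instance] Path.Homotopic.setoid

/-! ### The space `X̃_H` with the whisker topology and the endpoint projection -/

/-- The relation identifying paths `α ∼ β` from `x₀` iff they have the same endpoint
and `[α·β⁻] ∈ H`. -/
def WhiskerRel {X : Type} [TopologicalSpace X] (x₀ : X)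
    (H : Subgroup (FundamentalGroup X x₀)) :
    (Σ x : X, Path x₀ x) → (Σ x : X, Path x₀ x) → Prop :=
  fun a b => ∃ h : a.1 = b.1, loopClass (a.2.trans ((b.2.cast rfl h).symm)) ∈ H

/-- The space `X̃_H` of classes `H[α]` of paths starting at `x₀`. -/
def WhiskerSpace {X : Type} [TopologicalSpace X] (x₀ : X)
    (H : Subgroup (FundamentalGroup X x₀)) : Type :=
  Quot (WhiskerRel x₀ H)

/-- The basic set `B(H[α], U) = { H[α·ε] ∣ ε a path in U starting at `α 1` }`. -/
def whiskerBasic {X : Type} [TopologicalSpace X] (x₀ : X)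
    (H : Subgroup (FundamentalGroup X x₀)) (a : Σ x : X, Path x₀ x) (U : Set X) :
    Set (WhiskerSpace x₀ H) :=
  {q | ∃ (y : X) (ε : Path a.1 y), (∀ t, ε t ∈ U) ∧
    q = Quot.mk (WhiskerRel x₀ H) ⟨y, a.2.trans ε⟩}

/-- The whisker (standard) topology on `X̃_H`, generated by the sets `B(H[α], U)` for
`U` an open neighborhood of `α 1`. -/
instance whiskerTopology {X : Type} [TopologicalSpace X] (x₀ : X)
    (H : Subgroup (FundamentalGroup X x₀)) : TopologicalSpace (WhiskerSpace x₀ H) :=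
  TopologicalSpace.generateFrom
    {s | ∃ (a : Σ x : X, Path x₀ x) (U : Set X), IsOpen U ∧ a.1 ∈ U ∧
      s = whiskerBasic x₀ H a U}

/-- The endpoint projection `p_H : X̃_H → X`, `H[α] ↦ α 1`. -/
def endpointProj {X : Type} [TopologicalSpace X] (x₀ : X)
    (H : Subgroup (FundamentalGroup X x₀)) : WhiskerSpace x₀ H → X :=
  Quot.lift (fun a => a.1) (by rintro a b ⟨h, -⟩; exact h)

/-- A map has the unique path lifting property if any two paths with the same initial
point and equal compositions with the map are equal. -/
def HasUniquePathLifting {A B : Type} [TopologicalSpace A] [TopologicalSpace B]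
    (p : A → B) : Prop :=
  ∀ γ δ : C(unitInterval, A), γ 0 = δ 0 → (∀ t, p (γ t) = p (δ t)) → γ = δ

/-- The subgroup `π(β,U) = {[β·δ·β⁻] : δ a loop in U based at x}` and the subgroup
`π(x,U)` generated by all `π(β,U)` over paths `β` from `x₀` to `x`. -/
def spanierAt {X : Type} [TopologicalSpace X] (x₀ x : X) (U : Set X) :
    Subgroup (FundamentalGroup X x₀) :=
  Subgroup.closure {g | ∃ (β : Path x₀ x) (δ : Path x x),
    (∀ t, δ t ∈ U) ∧ g = loopClass ((β.trans δ).trans β.symm)}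


/-!
The natural map `X̃_N → X̃_H`, `N[α] ↦ H[α]`, has continuous local sections through every
point: if `π(x,U) ∩ H ≤ N`, then on `B(H[β],U)` the rule `H[β·ε] ↦ N[β·ε]` is well defined,
since `H[β·ε] = H[β·ε']` puts `[β·ε·ε'⁻·β⁻]` into `π(x,U) ∩ H`. Hence every path in `X̃_H`
lifts to `X̃_N` from any point over its start. Two paths in `X̃_H` with the same start and the
same projection to `X` lift to paths in `X̃_N` with the same start and the same projection,
which coincide because `p_N` has unique path lifting; projecting back, so do the given paths.
-/

lemma Path.trans_apply_mem {X : Type*} [TopologicalSpace X] {x y z : X} {γ : Path x y}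
    {γ' : Path y z} {U : Set X} (hγ : ∀ t, γ t ∈ U) (hγ' : ∀ t, γ' t ∈ U) (t : unitInterval) :
    γ.trans γ' t ∈ U := by
  rw [Path.trans_apply]
  split_ifs
  exacts [hγ _, hγ' _]

namespace Path.Homotopic.Quotient

variable {X : Type*} [TopologicalSpace X] {x y z : X}

theorem symm_trans_rev (γ : Path.Homotopic.Quotient x y) (δ : Path.Homotopic.Quotient y z) :
    (γ.trans δ).symm = δ.symm.trans γ.symm := by
  induction γ; induction δ
  simp only [← mk_trans, ← mk_symm, Path.trans_symm]

@[simp]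
theorem symm_symm (γ : Path.Homotopic.Quotient x y) : γ.symm.symm = γ := by
  induction γ
  simp only [← mk_symm, Path.symm_symm]

@[simp]
theorem trans_symm_cancel_left (γ : Path.Homotopic.Quotient x y)
    (δ : Path.Homotopic.Quotient x z) : γ.trans (γ.symm.trans δ) = δ := by
  rw [← trans_assoc, trans_symm, refl_trans]

@[simp]
theorem symm_trans_cancel_left (γ : Path.Homotopic.Quotient y x)
    (δ : Path.Homotopic.Quotient x z) : γ.symm.trans (γ.trans δ) = δ := by
  rw [← trans_assoc, symm_trans, refl_trans]

end Path.Homotopic.Quotient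

section WhiskerSpace

variable {X : Type} [TopologicalSpace X] {x₀ : X}

lemma loopClass_eq_of_mk_eq {γ δ : Path x₀ x₀}
    (h : Path.Homotopic.Quotient.mk γ = Path.Homotopic.Quotient.mk δ) :
    loopClass γ = loopClass δ :=
  congrArg FundamentalGroup.fromPath h

variable (H : Subgroup (FundamentalGroup X x₀))

abbrev whiskerMk {x : X} (α : Path x₀ x) : WhiskerSpace x₀ H :=
  Quot.mk (WhiskerRel x₀ H) ⟨x, α⟩

lemma whiskerRel_iff {x : X} (α β : Path x₀ x) :
    WhiskerRel x₀ H ⟨x, α⟩ ⟨x, β⟩ ↔ loopClass (α.trans β.symm) ∈ H :=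
  ⟨fun ⟨_, h⟩ => h, fun h => ⟨rfl, h⟩⟩

open Path.Homotopic.Quotient in
lemma whiskerRel_equivalence : Equivalence (WhiskerRel x₀ H) where
  refl := by
    rintro ⟨x, α⟩
    rw [whiskerRel_iff, loopClass_eq_of_mk_eq (γ := α.trans α.symm) (δ := .refl x₀) (by simp)]
    exact one_mem H
  symm := by
    rintro ⟨x, α⟩ ⟨y, β⟩ h
    obtain rfl : x = y := h.1
    rw [whiskerRel_iff] at h ⊢
    convert inv_mem h using 1
    show mk _ = (mk _).symm
    simp [symm_trans_rev]
  trans := by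
    rintro ⟨x, α⟩ ⟨y, β⟩ ⟨z, γ⟩ h₁ h₂
    obtain rfl : x = y := h₁.1
    obtain rfl : x = z := h₂.1
    rw [whiskerRel_iff] at h₁ h₂ ⊢
    convert mul_mem h₂ h₁ using 1
    show mk _ = (mk _).trans (mk _)
    simp

lemma whiskerMk_eq_iff {x : X} (α β : Path x₀ x) :
    whiskerMk H α = whiskerMk H β ↔ loopClass (α.trans β.symm) ∈ H :=
  Quot.eq.trans ((whiskerRel_equivalence H).eqvGen_iff.trans (whiskerRel_iff H α β))

lemma whiskerMk_eq_of_homotopic {x : X} {α β : Path x₀ x} (h : α.Homotopic β) :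
    whiskerMk H α = whiskerMk H β := by
  rw [whiskerMk_eq_iff,
    loopClass_eq_of_mk_eq (δ := β.trans β.symm) (by simp [Path.Homotopic.Quotient.eq.2 h])]
  exact (whiskerRel_iff H β β).1 ((whiskerRel_equivalence H).refl _)

open Path.Homotopic.Quotient in
lemma whiskerMk_trans_eq_of_eq {x y : X} {α β : Path x₀ x} (ε : Path x y)
    (h : whiskerMk H α = whiskerMk H β) :
    whiskerMk H (α.trans ε) = whiskerMk H (β.trans ε) := by
  rw [whiskerMk_eq_iff] at h ⊢
  convert h using 1
  show mk _ = mk _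
  simp

lemma endpointProj_eq_of_eq {x y : X} {α : Path x₀ x} {β : Path x₀ y}
    (h : whiskerMk H α = whiskerMk H β) : x = y :=
  congrArg (endpointProj x₀ H) h

lemma isOpen_whiskerBasic {a : Σ x : X, Path x₀ x} {U : Set X} (hU : IsOpen U) (ha : a.1 ∈ U) :
    IsOpen (whiskerBasic x₀ H a U) :=
  TopologicalSpace.isOpen_generateFrom_of_mem ⟨a, U, hU, ha, rfl⟩

lemma whiskerMk_mem_whiskerBasic {x : X} (α : Path x₀ x) {U : Set X} (hx : x ∈ U) :
    whiskerMk H α ∈ whiskerBasic x₀ H ⟨x, α⟩ U :=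
  ⟨x, Path.refl x, fun _ => hx, whiskerMk_eq_of_homotopic H (Path.Homotopic.trans_refl α).symm⟩

lemma whiskerBasic_congr {x : X} {α β : Path x₀ x} (h : whiskerMk H α = whiskerMk H β)
    (U : Set X) : whiskerBasic x₀ H ⟨x, α⟩ U = whiskerBasic x₀ H ⟨x, β⟩ U := by
  ext q
  constructor
  · rintro ⟨y, ε, hε, rfl⟩
    exact ⟨y, ε, hε, whiskerMk_trans_eq_of_eq H ε h⟩
  · rintro ⟨y, ε, hε, rfl⟩
    exact ⟨y, ε, hε, whiskerMk_trans_eq_of_eq H ε h.symm⟩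

end WhiskerSpace

section Projection

variable {X : Type} [TopologicalSpace X] {x₀ : X} {N H : Subgroup (FundamentalGroup X x₀)}

def WhiskerSpace.map (hNH : N ≤ H) : WhiskerSpace x₀ N → WhiskerSpace x₀ H :=
  Quot.lift (Quot.mk _) fun _ _ ⟨e, h⟩ => Quot.sound ⟨e, hNH h⟩

lemma WhiskerSpace.map_surjective (hNH : N ≤ H) : Function.Surjective (WhiskerSpace.map hNH) :=
  Quot.ind fun a => ⟨Quot.mk _ a, rfl⟩

lemma endpointProj_comp_map (hNH : N ≤ H) :
    endpointProj x₀ H ∘ WhiskerSpace.map hNH = endpointProj x₀ N :=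
  funext <| Quot.ind fun _ => rfl

end Projection

section LocalSection

variable {X : Type} [TopologicalSpace X] {x₀ : X} (N H : Subgroup (FundamentalGroup X x₀))
  {x : X} (β : Path x₀ x) {U : Set X}

open Path.Homotopic.Quotient in
lemma whiskerMk_trans_eq_of_spanierAt (hUN : spanierAt x₀ x U ⊓ H ≤ N) {y : X}
    {ε ε' : Path x y} (hε : ∀ t, ε t ∈ U) (hε' : ∀ t, ε' t ∈ U)
    (h : whiskerMk H (β.trans ε) = whiskerMk H (β.trans ε')) :
    whiskerMk N (β.trans ε) = whiskerMk N (β.trans ε') := by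
  rw [whiskerMk_eq_iff] at h ⊢
  have hloop : loopClass ((β.trans ε).trans (β.trans ε').symm) =
      loopClass ((β.trans (ε.trans ε'.symm)).trans β.symm) :=
    loopClass_eq_of_mk_eq (by simp)
  refine hUN ⟨?_, h⟩
  rw [hloop]
  exact Subgroup.subset_closure ⟨β, _, Path.trans_apply_mem hε fun t => hε' _, rfl⟩

open Classical in
def whiskerSection (U : Set X) : WhiskerSpace x₀ H → WhiskerSpace x₀ N :=
  fun q => if h : q ∈ whiskerBasic x₀ H ⟨x, β⟩ U then
    whiskerMk N (β.trans h.choose_spec.choose) else whiskerMk N β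

variable {N H β}

lemma whiskerSection_whiskerMk (hUN : spanierAt x₀ x U ⊓ H ≤ N) {y : X} {ε : Path x y}
    (hε : ∀ t, ε t ∈ U) :
    whiskerSection N H β U (whiskerMk H (β.trans ε)) = whiskerMk N (β.trans ε) := by
  have hmem : whiskerMk H (β.trans ε) ∈ whiskerBasic x₀ H ⟨x, β⟩ U := ⟨y, ε, hε, rfl⟩
  rw [whiskerSection, dif_pos hmem]
  have key : ∀ {y'} (ε' : Path x y'), (∀ t, ε' t ∈ U) →
      whiskerMk H (β.trans ε) = whiskerMk H (β.trans ε') →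
      whiskerMk N (β.trans ε') = whiskerMk N (β.trans ε) := by
    intro y' ε' hε' h
    obtain rfl := endpointProj_eq_of_eq H h
    exact (whiskerMk_trans_eq_of_spanierAt N H β hUN hε hε' h).symm
  exact key _ hmem.choose_spec.choose_spec.1 hmem.choose_spec.choose_spec.2

lemma continuousOn_whiskerSection (hU : IsOpen U) (hUN : spanierAt x₀ x U ⊓ H ≤ N) :
    ContinuousOn (whiskerSection N H β U) (whiskerBasic x₀ H ⟨x, β⟩ U) := by
  rintro _ ⟨y, ε, hε, rfl⟩
  refine TopologicalSpace.tendsto_nhds_generateFrom_iff.2 ?_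
  rintro _ ⟨⟨z, γ⟩, W, hW, hzW, rfl⟩ ⟨w, δ, hδ, hεδ⟩
  rw [whiskerSection_whiskerMk hUN hε] at hεδ
  obtain rfl := endpointProj_eq_of_eq N hεδ
  have hyW : y ∈ W := by simpa using hδ 1
  have hyU : y ∈ U := by simpa using hε 1
  have hnhds : whiskerBasic x₀ H ⟨y, β.trans ε⟩ (U ∩ W) ∈ nhds (whiskerMk H (β.trans ε)) :=
    (isOpen_whiskerBasic H (hU.inter hW) ⟨hyU, hyW⟩).mem_nhds
      (whiskerMk_mem_whiskerBasic H _ ⟨hyU, hyW⟩)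
  refine Filter.mem_of_superset (mem_nhdsWithin_of_mem_nhds hnhds) ?_
  rintro _ ⟨v, δ', hδ', rfl⟩
  refine ⟨v, δ.trans δ', Path.trans_apply_mem hδ fun t => (hδ' t).2, ?_⟩
  calc whiskerSection N H β U (whiskerMk H ((β.trans ε).trans δ'))
      _ = whiskerSection N H β U (whiskerMk H (β.trans (ε.trans δ'))) :=
        congrArg _ (whiskerMk_eq_of_homotopic H (.trans_assoc β ε δ'))
      _ = whiskerMk N (β.trans (ε.trans δ')) :=
        whiskerSection_whiskerMk hUN (Path.trans_apply_mem hε fun t => (hδ' t).1)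
      _ = whiskerMk N ((γ.trans δ).trans δ') :=
        (whiskerMk_eq_of_homotopic N (.trans_assoc β ε δ')).symm.trans
          (whiskerMk_trans_eq_of_eq N δ' hεδ)
      _ = whiskerMk N (γ.trans (δ.trans δ')) :=
        whiskerMk_eq_of_homotopic N (.trans_assoc γ δ δ')

end LocalSection

section PathLifting

open unitInterval

variable {E B : Type*} [TopologicalSpace E] [TopologicalSpace B]

/-- The neighbourhood `V` of `b` is chosen before the point `e`, so that a single partition of
a path in `B` serves every lift. -/
def HasLocalSections (q : E → B) : Prop :=
  ∀ b, ∃ V : Set B, IsOpen V ∧ b ∈ V ∧ ∀ e, q e ∈ V →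
    ∃ f : B → E, ContinuousOn f V ∧ f (q e) = e ∧ ∀ c ∈ V, q (f c) = c

theorem HasLocalSections.exists_path_lift {q : E → B} (hq : HasLocalSections q) (γ : C(I, B))
    {e : E} (he : q e = γ 0) : ∃ Γ : C(I, E), Γ 0 = e ∧ ∀ t, q (Γ t) = γ t := by
  choose V hVo hbV hsec using hq
  obtain ⟨t, ht0, htmono, ⟨n, htn⟩, htsub⟩ := exists_monotone_Icc_subset_open_cover_unitInterval
    (fun b => (hVo b).preimage γ.continuous) fun s _ => Set.mem_iUnion.2 ⟨γ s, hbV _⟩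
  suffices ∀ k, ∃ Γ : I → E, ContinuousOn Γ (Set.Icc 0 (t k)) ∧ Γ 0 = e ∧
      ∀ s ≤ t k, q (Γ s) = γ s by
    obtain ⟨Γ, hΓ, hΓ0, hqΓ⟩ := this n
    rw [htn n le_rfl, ← univ_eq_Icc, continuousOn_univ] at hΓ
    exact ⟨⟨Γ, hΓ⟩, hΓ0, fun s => hqΓ s (htn n le_rfl ▸ le_one')⟩
  intro k
  induction k with
  | zero =>
    refine ⟨fun _ => e, continuousOn_const, rfl, fun s hs => ?_⟩
    obtain rfl : s = 0 := le_antisymm (ht0 ▸ hs) nonneg'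
    exact he
  | succ k ih =>
    obtain ⟨Γ, hΓ, hΓ0, hqΓ⟩ := ih
    obtain ⟨b, hb⟩ := htsub k
    have hmem : q (Γ (t k)) ∈ V b := by
      rw [hqΓ _ le_rfl]
      exact hb ⟨le_rfl, htmono k.le_succ⟩
    obtain ⟨f, hfc, hfe, hqf⟩ := hsec b _ hmem
    classical
    refine ⟨fun s => if s ≤ t k then Γ s else f (γ s), ?_, by simp [hΓ0], fun s hs => ?_⟩
    · rw [← Set.Icc_union_Icc_eq_Icc nonneg' (htmono k.le_succ)]
      refine ContinuousOn.union_of_isClosed ?_ ?_ isClosed_Icc isClosed_Icc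
      · exact hΓ.congr fun s hs => if_pos hs.2
      · refine (hfc.comp γ.continuous.continuousOn hb).congr fun s hs => ?_
        split_ifs with hsk
        · rw [le_antisymm hsk hs.1, Function.comp_apply, ← hqΓ _ le_rfl, hfe]
        · rfl
    · dsimp only
      split_ifs with hsk
      · exact hqΓ s hsk
      · exact hqf _ (hb ⟨(not_le.1 hsk).le, hs⟩)

end PathLifting

theorem HasUniquePathLifting.of_hasLocalSections {E B Y : Type} [TopologicalSpace E]
    [TopologicalSpace B] [TopologicalSpace Y] {q : E → B} {p : B → Y} (hq : HasLocalSections q)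
    (hsurj : Function.Surjective q) (hpq : HasUniquePathLifting (p ∘ q)) :
    HasUniquePathLifting p := by
  intro γ δ h0 hp
  obtain ⟨e, he⟩ := hsurj (γ 0)
  obtain ⟨Γ, hΓ0, hqΓ⟩ := hq.exists_path_lift γ he
  obtain ⟨Δ, hΔ0, hqΔ⟩ := hq.exists_path_lift δ (he.trans h0)
  have hΓΔ : Γ = Δ :=
    hpq Γ Δ (hΓ0.trans hΔ0.symm) fun t => by simp only [Function.comp_apply, hqΓ, hqΔ, hp]
  ext t
  rw [← hqΓ, ← hqΔ, hΓΔ]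

theorem WhiskerSpace.hasLocalSections_map {X : Type} [TopologicalSpace X] {x₀ : X}
    {N H : Subgroup (FundamentalGroup X x₀)} (hNH : N ≤ H)
    (hU : ∀ x : X, ∃ U : Set X, IsOpen U ∧ x ∈ U ∧ spanierAt x₀ x U ⊓ H ≤ N) :
    HasLocalSections (WhiskerSpace.map hNH) := by
  intro b
  obtain ⟨⟨x, α⟩, rfl⟩ := Quot.exists_rep b
  obtain ⟨U, hUo, hxU, hUN⟩ := hU x
  refine ⟨whiskerBasic x₀ H ⟨x, α⟩ U, isOpen_whiskerBasic H hUo hxU,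
    whiskerMk_mem_whiskerBasic H α hxU, fun e he => ?_⟩
  obtain ⟨⟨y, β⟩, rfl⟩ := Quot.exists_rep e
  obtain ⟨z, ε, hε, hβ⟩ := he
  obtain rfl := endpointProj_eq_of_eq H hβ
  have hβε : ∀ K : Subgroup (FundamentalGroup X x₀),
      whiskerMk K ((β.trans ε.symm).trans ε) = whiskerMk K β :=
    fun K => whiskerMk_eq_of_homotopic K (Path.Homotopic.Quotient.eq.1 (by simp))
  have hβα : whiskerMk H (β.trans ε.symm) = whiskerMk H α :=
    (whiskerMk_trans_eq_of_eq H ε.symm hβ).trans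
      (whiskerMk_eq_of_homotopic H (Path.Homotopic.Quotient.eq.1 (by simp)))
  rw [← whiskerBasic_congr H hβα]
  refine ⟨whiskerSection N H (β.trans ε.symm) U, continuousOn_whiskerSection hUo hUN, ?_, ?_⟩
  · exact (congrArg _ (hβε H).symm).trans ((whiskerSection_whiskerMk hUN hε).trans (hβε N))
  · rintro _ ⟨w, δ, hδ, rfl⟩
    rw [whiskerSection_whiskerMk hUN hδ]
    rfl

theorem stmt15_general {X : Type} [MetricSpace X] (x₀ : X)
    (N H : Subgroup (FundamentalGroup X x₀)) (hNH : N ≤ H)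
    (hN : HasUniquePathLifting (endpointProj x₀ N))
    (hU : ∀ x : X, ∃ U : Set X, IsOpen U ∧ x ∈ U ∧ spanierAt x₀ x U ⊓ H ≤ N) :
    HasUniquePathLifting (endpointProj x₀ H) :=
  .of_hasLocalSections (WhiskerSpace.hasLocalSections_map hNH hU)
    (WhiskerSpace.map_surjective hNH) (by rwa [endpointProj_comp_map])

/-- If `N ≤ H ≤ π₁(X,x₀)` with `N` normal, `p_N : X̃_N → X` has the
unique path lifting property, and every point `x` has an open neighborhood `U` with
`π(x,U) ∩ H ≤ N`, then `p_H : X̃_H → X` has the unique path lifting property. -/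
theorem stmt15 {X : Type} [MetricSpace X] [PathConnectedSpace X] (x₀ : X)
    (N H : Subgroup (FundamentalGroup X x₀)) (hNH : N ≤ H) (hNnormal : N.Normal)
    (hN : HasUniquePathLifting (endpointProj x₀ N))
    (hU : ∀ x : X, ∃ U : Set X, IsOpen U ∧ x ∈ U ∧ spanierAt x₀ x U ⊓ H ≤ N) :
    HasUniquePathLifting (endpointProj x₀ H) :=
  stmt15_general x₀ N H hNH hN hU
end
end
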